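/- Let a_1, a_2, a_3, a_4 ∈ ℝ² form a convex quadrilateral in cyclic order. Then the line through a_1 and a_2 is disjoint from the region H_2^O ∩ H_4^O. -/
import Mathlib


/-- Twice the signed area of the triangle `p q r`; its sign tells on which side
of the directed line through `p` and `q` the point `r` lies. -/
def det2 (p q r : ℝ × ℝ) : ℝ :=
  (q.1 - p.1) * (r.2 - p.2) - (q.2 - p.2) * (r.1 - p.1)

/-- `v 0, v 1, v 2, v 3` form a convex quadrilateral in cyclic order: for each
`i`, the points `v (i+2)` and `v (i+3)` lie strictly on the same side of the
line through `v i` and `v (i+1)`. -/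
def ConvexCyclic (v : Fin 4 → ℝ × ℝ) : Prop :=
  ∀ i : Fin 4, 0 < det2 (v i) (v (i+1)) (v (i+2)) * det2 (v i) (v (i+1)) (v (i+3))

/-- The outer open half-plane of the edge `v i, v (i+1)`: the open half-plane
bounded by the line through `v i` and `v (i+1)` not containing `v (i+2)`
(and `v (i+3)`). -/
def Hout (v : Fin 4 → ℝ × ℝ) (i : Fin 4) : Set (ℝ × ℝ) :=
  {x | det2 (v i) (v (i+1)) x * det2 (v i) (v (i+1)) (v (i+2)) < 0}

/-- The inner open half-plane of the edge `v i, v (i+1)`: the open half-plane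
bounded by the line through `v i` and `v (i+1)` containing `v (i+2)`. -/
def Hin (v : Fin 4 → ℝ × ℝ) (i : Fin 4) : Set (ℝ × ℝ) :=
  {x | 0 < det2 (v i) (v (i+1)) x * det2 (v i) (v (i+1)) (v (i+2))}

/-- For a convex quadrilateral in cyclic order, the line
through `v 0` and `v 1` (the first two vertices) is disjoint from
`H₂ᴼ ∩ H₄ᴼ` (0-based: `Hout v 1 ∩ Hout v 3`). -/
theorem line_misses_outer_wedge (v : Fin 4 → ℝ × ℝ) (hconv : ConvexCyclic v) :
    ∀ x : ℝ × ℝ, det2 (v 0) (v 1) x = 0 → x ∉ Hout v 1 ∩ Hout v 3 := by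
  intro x h0 hx
  obtain ⟨hx1, hx3⟩ := hx
  have hc1 := hconv 1
  have hc3 := hconv 3
  simp only [Hout, Set.mem_setOf_eq] at hx1 hx3
  have h12 : (1 : Fin 4) + 1 = 2 := rfl
  have h13 : (1 : Fin 4) + 2 = 3 := rfl
  have h14 : (1 : Fin 4) + 3 = 0 := rfl
  have h30 : (3 : Fin 4) + 1 = 0 := rfl
  have h31 : (3 : Fin 4) + 2 = 1 := rfl
  have h32 : (3 : Fin 4) + 3 = 2 := rfl
  rw [h12, h13] at hx1
  rw [h30, h31] at hx3
  rw [h12, h13, h14] at hc1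
  rw [h30, h31, h32] at hc3
  set a := v 0 with ha
  set b := v 1 with hb
  set c := v 2 with hc
  set d := v 3 with hd
  -- abbreviations
  set A := det2 b c x with hA
  set B := det2 d a x with hB
  set α := det2 b c a with hα
  set β := det2 d a b with hβ
  -- key algebraic identity on the line through a, b
  have key : A * β + B * α = α * β := by
    simp only [hA, hB, hα, hβ, det2] at *
    linear_combination (-c.2*d.1 + c.1*d.2 + b.2*d.1 - b.1*d.2 - a.2*c.1 + a.2*b.1
      + a.1*c.2 - a.1*b.2) * h0
  -- sign facts
  have hαd : 0 < det2 b c d * α := hc1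
  have hAd : A * det2 b c d < 0 := hx1
  have hBβ : B * β < 0 := hx3
  have hβne : β ≠ 0 := by
    intro h
    rw [h] at hc3
    simp at hc3
  have hαne : α ≠ 0 := fun h => by rw [h] at hαd; simp at hαd
  have hAα : A * α < 0 := by
    rcases lt_or_gt_of_ne hαne with hneg | hpos
    · have : det2 b c d < 0 := by nlinarith
      nlinarith
    · have : 0 < det2 b c d := by nlinarith
      nlinarith
  have hβsq : 0 < β ^ 2 := by positivity
  have hαsq : 0 < α ^ 2 := by positivity
  have key2 : A * α * β ^ 2 + B * β * α ^ 2 = α ^ 2 * β ^ 2 := by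
    linear_combination (α * β) * key
  nlinarith [mul_neg_of_neg_of_pos hAα hβsq, mul_neg_of_neg_of_pos hBβ hαsq,
    mul_pos hαsq hβsq]
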